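/- Let a, b, e, f be rational numbers and T = exp(N(a,b,e,f)). Then all entries of T are integers if and only if a ∈ ℤ, b ∈ ℤ, e + ab/2 ∈ ℤ, e − ab/2 ∈ ℤ, and f − a²b/6 ∈ ℤ. -/

import Mathlib

open Matrix

/-- The symplectic form matrix `J`. -/
def Jmat (R : Type*) [Zero R] [One R] [Neg R] : Matrix (Fin 4) (Fin 4) R :=
  !![0, 0, 0, 1;
     0, 0, 1, 0;
     0, -1, 0, 0;
     -1, 0, 0, 0]

/-- The normalized nilpotent matrix `N(a,b,e,f)`. -/
def Nmat {R : Type*} [Zero R] [Neg R] (a b e f : R) : Matrix (Fin 4) (Fin 4) R :=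
  !![0, 0, 0, 0;
     a, 0, 0, 0;
     e, b, 0, 0;
     f, e, -a, 0]

open scoped Nat

theorem NormedSpace.exp_eq_sum_range_of_pow_eq_zero {𝔸 : Type*} [Ring 𝔸] [Algebra ℚ 𝔸]
    [TopologicalSpace 𝔸] [IsTopologicalRing 𝔸] {x : 𝔸} {k : ℕ} (hx : x ^ k = 0) :
    exp x = ∑ i ∈ Finset.range k, (i ! : ℚ)⁻¹ • x ^ i := by
  rw [exp_eq_tsum_rat]
  refine tsum_eq_sum fun i hi => ?_
  rw [pow_eq_zero_of_le (by simpa using hi) hx, smul_zero]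

theorem Nmat_pow_four {R : Type*} [CommRing R] (a b e f : R) : Nmat a b e f ^ 4 = 0 := by
  ext i j
  fin_cases i <;> fin_cases j <;> simp [Nmat, pow_succ, mul_apply, Fin.sum_univ_four]

theorem exp_Nmat {𝕂 : Type*} [Field 𝕂] [CharZero 𝕂] [TopologicalSpace 𝕂] [IsTopologicalRing 𝕂]
    (a b e f : 𝕂) :
    NormedSpace.exp (Nmat a b e f) =
      !![1, 0, 0, 0;
         a, 1, 0, 0;
         e + a * b / 2, b, 1, 0;
         f - a ^ 2 * b / 6, e - a * b / 2, -a, 1] := by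
  rw [NormedSpace.exp_eq_sum_range_of_pow_eq_zero (Nmat_pow_four a b e f)]
  ext i j
  fin_cases i <;> fin_cases j <;>
    simp [Finset.sum_range_succ, Nmat, pow_succ, Rat.smul_def] <;> ring

theorem exists_intCast_eq_neg_iff {R : Type*} [Ring R] {x : R} :
    (∃ n : ℤ, -x = n) ↔ ∃ n : ℤ, x = n :=
  ⟨fun ⟨n, h⟩ => ⟨-n, by simp [← h]⟩, fun ⟨n, h⟩ => ⟨-n, by simp [h]⟩⟩

theorem forall_exists_intCast_eq_unitriangular_iff {R : Type*} [Ring R] (a b c d g : R) :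
    (∀ i j : Fin 4, ∃ n : ℤ,
        !![1, 0, 0, 0;
           a, 1, 0, 0;
           c, b, 1, 0;
           g, d, -a, 1] i j = n) ↔
      (∃ n : ℤ, a = n) ∧ (∃ n : ℤ, b = n) ∧ (∃ n : ℤ, c = n) ∧ (∃ n : ℤ, d = n) ∧
        ∃ n : ℤ, g = n := by
  have h0 : ∃ n : ℤ, (0 : R) = n := ⟨0, Int.cast_zero.symm⟩
  have h1 : ∃ n : ℤ, (1 : R) = n := ⟨1, Int.cast_one.symm⟩
  simp only [Fin.forall_fin_succ, Fin.isValue, of_apply, cons_val', cons_val_zero,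
    cons_val_fin_one, cons_val_succ, IsEmpty.forall_iff, h0, h1, exists_intCast_eq_neg_iff,
    and_self, and_true, true_and]
  tauto

/-- for rational `a,b,e,f` and `T = exp(N(a,b,e,f))`, all entries of
`T` are integers iff `a, b, e + ab/2, e − ab/2, f − a²b/6 ∈ ℤ`. -/
theorem stmt2 (a b e f : ℚ) (T : Matrix (Fin 4) (Fin 4) ℚ)
    (hT : T = NormedSpace.exp (Nmat a b e f)) :
    (∀ i j : Fin 4, ∃ n : ℤ, T i j = (n : ℚ)) ↔
      ((∃ n : ℤ, a = (n : ℚ)) ∧ (∃ n : ℤ, b = (n : ℚ)) ∧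
       (∃ n : ℤ, e + a * b / 2 = (n : ℚ)) ∧ (∃ n : ℤ, e - a * b / 2 = (n : ℚ)) ∧
       (∃ n : ℤ, f - a ^ 2 * b / 6 = (n : ℚ))) := by
  rw [hT, exp_Nmat, forall_exists_intCast_eq_unitriangular_iff]
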